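/- arXiv:1511.02328 — 2 statements merged into one kernel-verified Lean document; each statement's English description precedes it below -/
import Mathlib

section
/- Let 𝒜 be a symmetric real tensor of even order m and dimension n. Then the function x ↦ 𝒜x^m attains a maximum value μ on the set {x ∈ ℝ^n : ‖x‖_m = 1}; this value μ is an H-eigenvalue of 𝒜, and every H-eigenvalue λ of 𝒜 satisfies λ ≤ μ. Consequently λ_max(𝒜) = max_{x ≠ 0} 𝒜x^m/‖x‖_m^m = max_{‖x‖_m = 1} 𝒜x^m, where λ_max(𝒜) denotes the maximum H-eigenvalue of 𝒜. -/
open MvPolynomial Finset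

noncomputable section

/-- `tmul A x = 𝒜 x^m`, the homogeneous form associated with an
`m`-th order `n`-dimensional tensor `A`. -/
def tmul {m n : ℕ} (A : (Fin m → Fin n) → ℝ) (x : Fin n → ℝ) : ℝ :=
  ∑ g : Fin m → Fin n, A g * ∏ j, x (g j)

/-- A tensor is symmetric if its entries are invariant under permutations of the indices. -/
def IsSymT {m n : ℕ} (A : (Fin m → Fin n) → ℝ) : Prop :=
  ∀ (σ : Equiv.Perm (Fin m)) (g : Fin m → Fin n), A (g ∘ σ) = A g

/-- `lam` is an H-eigenvalue of a tensor of order `m + 1`: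
there is a nonzero `x` with `𝒜 x^m = lam * x^{[m]}`. -/
def IsHEig {m n : ℕ} (A : (Fin (m + 1) → Fin n) → ℝ) (lam : ℝ) : Prop :=
  ∃ x : Fin n → ℝ, x ≠ 0 ∧ ∀ i : Fin n,
    (∑ g : Fin m → Fin n, A (Fin.cons i g) * ∏ j, x (g j)) = lam * x i ^ m

/-- `𝒜_Γ x_Γ^m` for a subtensor `B` indexed by an index set `Γ ⊆ {1,…,n}`. -/
def subTmul {m n : ℕ} (Γ : Finset (Fin n)) (B : (Fin m → Γ) → ℝ) (x : Fin n → ℝ) : ℝ :=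
  ∑ g : Fin m → Γ, B g * ∏ j, x (g j).1

/-- An index tuple is off-diagonal if not all of its entries coincide. -/
def NotDiag {m : ℕ} {I : Type*} (g : Fin m → I) : Prop := ¬ ∀ j j' : Fin m, g j = g j'

/-- Condition (iii) in the definition of a W-tensor, for one subtensor. -/
def WCondIII {m n : ℕ} {Γ : Finset (Fin n)} (B : (Fin m → Γ) → ℝ) : Prop :=
  (∃ gb : Fin m → Γ, NotDiag gb ∧ ∀ g : Fin m → Γ, NotDiag g →
      (∀ σ : Equiv.Perm (Fin m), g ≠ gb ∘ σ) → B g = 0) ∨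
  (∀ g : Fin m → Γ, NotDiag g → 0 ≤ B g)

/-- Condition (i) in the definition of a W-tensor. -/
def WCondI {n s : ℕ} (Γ : Fin s → Finset (Fin n)) : Prop :=
  ∀ p : Fin s, 0 < (p : ℕ) →
    (((Finset.univ.filter fun l => l < p).biUnion Γ) ∩ Γ p).card ≤ 1

/-- W-tensor. -/
def IsWTensor {m n : ℕ} (A : (Fin m → Fin n) → ℝ) : Prop :=
  ∃ (s : ℕ) (Γ : Fin s → Finset (Fin n)) (B : ∀ l : Fin s, (Fin m → Γ l) → ℝ),
    0 < s ∧ s ≤ n ∧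
    Function.Injective Γ ∧
    Finset.univ.biUnion Γ = Finset.univ ∧
    WCondI Γ ∧
    (∀ x : Fin n → ℝ, tmul A x = ∑ l, subTmul (Γ l) (B l) x) ∧
    (∀ l, WCondIII (B l))

/-- Sums of squares of polynomials. -/
def IsSOSPoly {σ : Type*} (p : MvPolynomial σ ℝ) : Prop :=
  ∃ (r : ℕ) (q : Fin r → MvPolynomial σ ℝ), p = ∑ j, q j ^ 2

/-- The polynomial `𝒜 x^m` as a formal multivariate polynomial. -/
def tpoly {m n : ℕ} (A : (Fin m → Fin n) → ℝ) : MvPolynomial (Fin n) ℝ :=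
  ∑ g : Fin m → Fin n, MvPolynomial.C (A g) * ∏ j, MvPolynomial.X (g j)

/-- The polynomial `𝒜_Γ x_Γ^m` of a subtensor, in the variables `x_Γ`. -/
def subTpoly {m n : ℕ} (Γ : Finset (Fin n)) (B : (Fin m → Γ) → ℝ) : MvPolynomial Γ ℝ :=
  ∑ g : Fin m → Γ, MvPolynomial.C (B g) * ∏ j, MvPolynomial.X (g j)

/-- A (symmetric) tensor is copositive if `𝒜 x^m ≥ 0` for all entrywise-nonnegative `x`. -/
def Copositive {m n : ℕ} (A : (Fin m → Fin n) → ℝ) : Prop :=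
  ∀ x : Fin n → ℝ, (∀ i, 0 ≤ x i) → 0 ≤ tmul A x

/-
The maximum `μ` of `𝒜x^m` on the compact sphere `∑ xᵢ^m = 1` exists, and since `m` is even,
homogeneity gives `𝒜x^m ≤ μ ∑ xᵢ^m` on all of `ℝⁿ`. A maximiser `y` is therefore a global minimum
of `μ ∑ xᵢ^m - 𝒜x^m`. By symmetry of `𝒜` the gradient of `𝒜x^m` is `m 𝒜x^{m-1}`, so the
vanishing gradient at `y` says `𝒜y^{m-1} = μ y^[m-1]`. Conversely, contracting an H-eigenpair
`(λ, x)` with `x` gives `𝒜x^m = λ ∑ xᵢ^m ≤ μ ∑ xᵢ^m`, so `λ ≤ μ`.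
-/

section Homogeneity

variable {k n : ℕ}

lemma tmul_smul (A : (Fin k → Fin n) → ℝ) (t : ℝ) (x : Fin n → ℝ) :
    tmul A (t • x) = t ^ k * tmul A x := by
  simp only [tmul, Pi.smul_apply, smul_eq_mul, prod_mul_distrib, prod_const, card_univ,
    Fintype.card_fin, mul_sum]
  exact sum_congr rfl fun g _ => by ring

lemma continuous_tmul (A : (Fin k → Fin n) → ℝ) : Continuous (tmul A) := by
  unfold tmul
  fun_prop

lemma sum_pow_pos (hk : Even k) {x : Fin n → ℝ} (hx : x ≠ 0) : 0 < ∑ i, x i ^ k := by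
  obtain ⟨i, hi⟩ := Function.ne_iff.1 hx
  exact sum_pos' (fun j _ => hk.pow_nonneg _) ⟨i, mem_univ _, hk.pow_pos hi⟩

lemma isCompact_setOf_sum_pow_eq_one (hk : Even k) (hk0 : k ≠ 0) :
    IsCompact {x : Fin n → ℝ | ∑ i, x i ^ k = 1} := by
  refine (isCompact_closedBall (0 : Fin n → ℝ) 1).of_isClosed_subset
    (isClosed_eq (by fun_prop) continuous_const) fun x hx => ?_
  rw [mem_closedBall_zero_iff, pi_norm_le_iff_of_nonneg zero_le_one]
  intro i
  have hxi : |x i| ^ k ≤ 1 := by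
    rw [hk.pow_abs, ← hx.out]
    exact single_le_sum (fun j _ => hk.pow_nonneg (x j)) (mem_univ i)
  exact (pow_le_one_iff_of_nonneg (abs_nonneg _) hk0).1 hxi

lemma exists_pow_mul_eq_one {c : ℝ} (hc : 0 < c) (hk : k ≠ 0) :
    ∃ t : ℝ, 0 < t ∧ t ^ k * c = 1 :=
  ⟨c⁻¹ ^ (k⁻¹ : ℝ), by positivity, by
    rw [Real.rpow_inv_natCast_pow (inv_nonneg.2 hc.le) hk, inv_mul_cancel₀ hc.ne']⟩

lemma tmul_le_mul_sum_pow (hk : Even k) (hk0 : k ≠ 0) (A : (Fin k → Fin n) → ℝ) {μ : ℝ}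
    (hμ : ∀ z : Fin n → ℝ, ∑ i, z i ^ k = 1 → tmul A z ≤ μ) (x : Fin n → ℝ) :
    tmul A x ≤ μ * ∑ i, x i ^ k := by
  rcases eq_or_ne x 0 with rfl | hx
  · simpa [zero_pow hk0] using (tmul_smul A 0 0).le
  obtain ⟨t, ht, htc⟩ := exists_pow_mul_eq_one (sum_pow_pos hk hx) hk0
  have hz := hμ (t • x) (by simpa [mul_pow, ← mul_sum] using htc)
  rw [tmul_smul, ← mul_one μ, ← htc] at hz
  nlinarith [pow_pos ht k]

end Homogeneity

lemma IsSymT.sum_mul_comp_perm {k n : ℕ} {A : (Fin k → Fin n) → ℝ} (hsym : IsSymT A)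
    (σ : Equiv.Perm (Fin k)) (F : (Fin k → Fin n) → ℝ) :
    ∑ g, A g * F (g ∘ σ) = ∑ g, A g * F g := by
  calc ∑ g, A g * F (g ∘ σ) = ∑ g, A (g ∘ σ) * F (g ∘ σ) := by simp only [hsym σ]
    _ = ∑ g, A g * F g := Equiv.sum_comp (σ.symm.arrowCongr (Equiv.refl _)) fun g => A g * F g

lemma sum_fin_succ_pi {m : ℕ} {α : Type*} [Fintype α] (F : (Fin (m + 1) → α) → ℝ) :
    ∑ g, F g = ∑ i, ∑ h : Fin m → α, F (Fin.cons i h) := by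
  rw [← (Fin.consEquiv fun _ => α).sum_comp, Fintype.sum_prod_type]
  rfl

section Gradient

variable {m n : ℕ}

/-- The vector `𝒜x^{m-1}` of the paper, for a tensor `A` of order `m + 1`. -/
def tmulVec (A : (Fin (m + 1) → Fin n) → ℝ) (x : Fin n → ℝ) (i : Fin n) : ℝ :=
  ∑ g : Fin m → Fin n, A (Fin.cons i g) * ∏ j, x (g j)

lemma sum_mul_tmulVec (A : (Fin (m + 1) → Fin n) → ℝ) (v x : Fin n → ℝ) :
    ∑ i, v i * tmulVec A x i = ∑ g, A g * (v (g 0) * ∏ j ∈ univ.erase 0, x (g j)) := by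
  rw [sum_fin_succ_pi]
  refine sum_congr rfl fun i _ => ?_
  rw [tmulVec, mul_sum]
  refine sum_congr rfl fun h _ => ?_
  simp only [Fin.univ_succ, erase_cons, prod_map, Fin.cons_zero, Function.Embedding.coeFn_mk,
    Fin.cons_succ]
  ring

lemma tmul_eq_sum_mul_tmulVec (A : (Fin (m + 1) → Fin n) → ℝ) (x : Fin n → ℝ) :
    tmul A x = ∑ i, x i * tmulVec A x i := by
  rw [sum_mul_tmulVec, tmul]
  exact sum_congr rfl fun g _ => by rw [mul_prod_erase _ (fun j => x (g j)) (mem_univ 0)]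

lemma tmul_eq_of_eigen {A : (Fin (m + 1) → Fin n) → ℝ} {lam : ℝ} {x : Fin n → ℝ}
    (hx : ∀ i, tmulVec A x i = lam * x i ^ m) :
    tmul A x = lam * ∑ i, x i ^ (m + 1) := by
  simp only [tmul_eq_sum_mul_tmulVec, hx, mul_sum, pow_succ]
  exact sum_congr rfl fun i _ => by ring

def dotL (w : Fin n → ℝ) : (Fin n → ℝ) →L[ℝ] ℝ :=
  ∑ i, w i • ContinuousLinearMap.proj i

@[simp]
lemma dotL_apply (w v : Fin n → ℝ) : dotL w v = ∑ i, w i * v i := by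
  simp [dotL]

lemma hasFDerivAt_sum_pow (x : Fin n → ℝ) :
    HasFDerivAt (fun x : Fin n → ℝ => ∑ i, x i ^ (m + 1))
      (((m : ℝ) + 1) • dotL fun i => x i ^ m) x := by
  refine (HasFDerivAt.fun_sum fun i _ => (hasFDerivAt_apply i x).pow (m + 1)).congr_fderiv ?_
  ext v
  simp [mul_sum, mul_assoc]

lemma IsSymT.sum_mul_apply_mul_prod_erase {A : (Fin (m + 1) → Fin n) → ℝ} (hsym : IsSymT A)
    (v x : Fin n → ℝ) (j : Fin (m + 1)) :
    ∑ g, A g * (v (g j) * ∏ l ∈ univ.erase j, x (g l))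
      = ∑ g, A g * (v (g 0) * ∏ l ∈ univ.erase 0, x (g l)) := by
  rw [← hsym.sum_mul_comp_perm (Equiv.swap 0 j)]
  refine sum_congr rfl fun g _ => ?_
  congr 2
  · simp
  · refine prod_equiv (Equiv.swap 0 j) (fun l => ?_) fun l _ => rfl
    simp [Equiv.swap_apply_eq_iff]

lemma hasFDerivAt_tmul {A : (Fin (m + 1) → Fin n) → ℝ} (hsym : IsSymT A) (x : Fin n → ℝ) :
    HasFDerivAt (tmul A) (((m : ℝ) + 1) • dotL (tmulVec A x)) x := by
  have hprod (g : Fin (m + 1) → Fin n) :=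
    HasFDerivAt.finsetProd (𝕜 := ℝ) (x := x) (u := univ) (g := fun j (y : Fin n → ℝ) => y (g j))
      fun j _ => hasFDerivAt_apply (g j) x
  refine (HasFDerivAt.fun_sum fun g _ => (hprod g).const_mul (A g)).congr_fderiv ?_
  ext v
  simp only [_root_.sum_apply, smul_apply, ContinuousLinearMap.proj_apply, smul_eq_mul,
    dotL_apply]
  calc ∑ g, A g * ∑ j, (∏ l ∈ univ.erase j, x (g l)) * v (g j)
      = ∑ j : Fin (m + 1), ∑ g, A g * (v (g j) * ∏ l ∈ univ.erase j, x (g l)) := by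
        rw [sum_comm]
        simp only [mul_sum, mul_comm]
    _ = ∑ _j : Fin (m + 1), ∑ i, v i * tmulVec A x i := by
        simp only [hsym.sum_mul_apply_mul_prod_erase, sum_mul_tmulVec]
    _ = ((m : ℝ) + 1) * ∑ i, tmulVec A x i * v i := by
        simp [mul_comm]

lemma tmulVec_eq_of_le_mul_sum_pow {A : (Fin (m + 1) → Fin n) → ℝ} (hsym : IsSymT A) {μ : ℝ}
    {y : Fin n → ℝ} (hle : ∀ x, tmul A x ≤ μ * ∑ i, x i ^ (m + 1))
    (hy : tmul A y = μ * ∑ i, y i ^ (m + 1)) (i : Fin n) :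
    tmulVec A y i = μ * y i ^ m := by
  have hmin : IsLocalMin (fun x => μ * ∑ i, x i ^ (m + 1) - tmul A x) y :=
    Filter.Eventually.of_forall fun x => by linarith [hle x]
  have hgrad := hmin.hasFDerivAt_eq_zero
    (((hasFDerivAt_sum_pow y).const_mul μ).sub (hasFDerivAt_tmul hsym y))
  have hi := congrArg (fun L => L (Pi.single i 1)) hgrad
  simp only [sub_apply, smul_apply, dotL_apply, Pi.single_apply, mul_ite, mul_one, mul_zero,
    sum_ite_eq', mem_univ, ↓reduceIte, smul_eq_mul, zero_apply] at hi
  have hm : (m : ℝ) + 1 ≠ 0 := by positivity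
  exact mul_left_cancel₀ hm (by linear_combination -hi)

end Gradient

/-- Lemma 2.1 (maximum part): for an even-order symmetric tensor, `𝒜x^m`
attains a maximum `μ` on the unit `m`-sphere `{x : ‖x‖_m = 1}`; this value is the
maximum H-eigenvalue, and `λ_max = max_{x ≠ 0} 𝒜x^m / ‖x‖_m^m`. -/
theorem lemma21_max (m n : ℕ) (hn : 0 < n) (heven : Even (m + 1))
    (A : (Fin (m + 1) → Fin n) → ℝ) (hsym : IsSymT A) :
    ∃ μ : ℝ,
      (∃ x : Fin n → ℝ, (∑ i, x i ^ (m + 1)) = 1 ∧ tmul A x = μ) ∧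
      (∀ x : Fin n → ℝ, (∑ i, x i ^ (m + 1)) = 1 → tmul A x ≤ μ) ∧
      IsHEig A μ ∧
      (∀ lam : ℝ, IsHEig A lam → lam ≤ μ) ∧
      (∀ x : Fin n → ℝ, x ≠ 0 → tmul A x / ∑ i, |x i| ^ (m + 1) ≤ μ) := by
  obtain ⟨y, hy1, hmax⟩ := (isCompact_setOf_sum_pow_eq_one heven m.succ_ne_zero).exists_isMaxOn
    ⟨Pi.single ⟨0, hn⟩ 1, by simp [Pi.single_apply]⟩ (continuous_tmul A).continuousOn
  have hle := tmul_le_mul_sum_pow heven m.succ_ne_zero A fun z hz => hmax hz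
  have hy0 : y ≠ 0 := by
    rintro rfl
    simp at hy1
  have heig := tmulVec_eq_of_le_mul_sum_pow hsym hle (by rw [hy1.out, mul_one])
  refine ⟨tmul A y, ⟨y, hy1, rfl⟩, fun x hx => hmax hx, ⟨y, hy0, heig⟩, ?_, fun x hx => ?_⟩
  · rintro lam ⟨x, hx0, hx⟩
    have hlam := hle x
    rw [tmul_eq_of_eigen hx] at hlam
    exact le_of_mul_le_mul_right hlam (sum_pow_pos heven hx0)
  · simp only [heven.pow_abs]
    rw [div_le_iff₀ (sum_pow_pos heven hx)]
    exact hle x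

end
end

section
/- Let G = (V, E) be an m-uniform hyper-tree generated by independent vertices. Then the Laplacian tensor ℒ of G is a symmetric W-tensor. -/
open MvPolynomial Finset

noncomputable section

/-- The adjacency tensor of an `m`-uniform hypergraph with edge set `E`:
entry `1/(m−1)!` at tuples whose underlying vertex set is an edge, `0` otherwise. -/
def adjT (m n : ℕ) (E : Finset (Finset (Fin n))) : (Fin m → Fin n) → ℝ :=
  fun g => if Finset.image g Finset.univ ∈ E then 1 / (Nat.factorial (m - 1) : ℝ) else 0

/-- The degree of a vertex: the number of edges containing it. -/
def degT {n : ℕ} (E : Finset (Finset (Fin n))) (i : Fin n) : ℕ :=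
  (E.filter fun e => i ∈ e).card

/-- The Laplacian tensor `ℒ = 𝒟 − 𝒜` of a hypergraph. -/
def lapT (m n : ℕ) (E : Finset (Finset (Fin n))) : (Fin m → Fin n) → ℝ :=
  fun g => (∑ i : Fin n, if g = Function.const (Fin m) i then (degT E i : ℝ) else 0)
    - adjT m n E g

/-!
The Laplacian is the sum over hyperedges `e` of the Laplacian of the single hyperedge `e`, a tensor
supported on the index set `e` whose only nonzero off-diagonal entries sit at the permutations of
one tuple enumerating `e`. Condition (i) asks for an ordering of the hyperedges in which each one
meets the union of its predecessors in at most one vertex. Distinct hyperedges share only tree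
vertices, so it suffices to order the tree edges: sort them by the depth (distance to a fixed root)
of their deeper endpoint. In a tree every vertex has exactly one neighbour closer to the root, so
the deeper endpoint of an edge lies on no earlier edge.
-/

section LaplacianTensor

variable {m n : ℕ}

theorem tmul_sum {ι : Type*} (s : Finset ι) (A : ι → (Fin m → Fin n) → ℝ) (x : Fin n → ℝ) :
    tmul (fun g => ∑ i ∈ s, A i g) x = ∑ i ∈ s, tmul (A i) x := by
  simp only [tmul, Finset.sum_mul]
  exact Finset.sum_comm

theorem tmul_eq_subTmul_of_mem {A : (Fin m → Fin n) → ℝ} (Γ : Finset (Fin n))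
    (hA : ∀ g, A g ≠ 0 → ∀ j, g j ∈ Γ) (x : Fin n → ℝ) :
    tmul A x = subTmul Γ (fun g => A (Subtype.val ∘ g)) x := by
  refine (Fintype.sum_of_injective (Subtype.val ∘ ·)
    (fun g g' h => funext fun j => Subtype.ext (congrFun h j)) _ _ ?_ fun _ => rfl).symm
  intro g hg
  by_contra hne
  exact hg ⟨fun j => ⟨g j, hA g (left_ne_zero_of_mul hne) j⟩, rfl⟩

theorem lapT_isSymT (E : Finset (Finset (Fin n))) : IsSymT (lapT m n E) := by
  intro σ g
  have himage : Finset.univ.image (g ∘ σ) = Finset.univ.image g := by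
    rw [← Finset.image_image, Finset.image_univ_equiv]
  have hconst : ∀ i, g ∘ σ = Function.const (Fin m) i ↔ g = Function.const (Fin m) i :=
    fun i => ⟨fun h => funext fun j => by simpa using congrFun h (σ.symm j),
      fun h => by rw [h]; rfl⟩
  simp only [lapT, adjT, himage, hconst]

theorem lapT_empty : lapT m n ∅ = 0 := by
  ext g
  simp [lapT, adjT, degT]

theorem lapT_eq_sum_lapT_singleton (E : Finset (Finset (Fin n))) (g : Fin m → Fin n) :
    lapT m n E g = ∑ e ∈ E, lapT m n {e} g := by
  have hdeg : ∀ i, (degT E i : ℝ) = ∑ e ∈ E, (degT {e} i : ℝ) := by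
    intro i
    simp only [degT, Finset.card_filter, Finset.filter_singleton]
    push_cast
    exact Finset.sum_congr rfl fun e _ => by split_ifs <;> simp
  have hadj : adjT m n E g = ∑ e ∈ E, adjT m n {e} g := by
    simp only [adjT, Finset.mem_singleton, Finset.sum_ite_eq]
  simp only [lapT, hdeg, hadj, Finset.sum_sub_distrib]
  rw [Finset.sum_comm (s := E)]
  simp only [Finset.sum_ite_irrel, Finset.sum_const_zero]

theorem mem_of_lapT_singleton_ne_zero {e : Finset (Fin n)} {g : Fin m → Fin n}
    (hg : lapT m n {e} g ≠ 0) (j : Fin m) : g j ∈ e := by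
  by_cases himage : Finset.univ.image g = e
  · exact himage ▸ Finset.mem_image_of_mem g (Finset.mem_univ j)
  · have hdiag : ∑ i, (if g = Function.const (Fin m) i then (degT {e} i : ℝ) else 0) ≠ 0 := by
      simpa [lapT, adjT, himage] using hg
    obtain ⟨i, -, hi⟩ := Finset.exists_ne_zero_of_sum_ne_zero hdiag
    obtain ⟨rfl, hdeg⟩ : g = Function.const (Fin m) i ∧ (degT {e} i : ℝ) ≠ 0 := by
      split_ifs at hi with h
      · exact ⟨h, hi⟩
      · exact absurd rfl hi
    simpa [degT, Finset.filter_singleton] using hdeg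

theorem wCondIII_lapT_singleton {e : Finset (Fin n)} (hm : 2 ≤ m) (he : e.card = m) :
    WCondIII (fun g : Fin m → e => lapT m n {e} (Subtype.val ∘ g)) := by
  have hcard : Fintype.card e = m := by simpa using he
  let gb : Fin m ≃ e := (Fintype.equivFinOfCardEq hcard).symm
  refine Or.inl ⟨gb, fun h => ?_, fun g hg hperm => ?_⟩
  · have := gb.injective (h ⟨0, by omega⟩ ⟨1, by omega⟩)
    simp at this
  have hnotconst : ∀ i, Subtype.val ∘ g ≠ Function.const (Fin m) i := fun i h =>
    hg fun j j' => Subtype.ext ((congrFun h j).trans (congrFun h j').symm)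
  have hnotsurj : Finset.univ.image (Subtype.val ∘ g) ≠ e := by
    intro himage
    have hsurj : Function.Surjective g := fun v => by
      have hv : (v : Fin n) ∈ Finset.univ.image (Subtype.val ∘ g) := by rw [himage]; exact v.2
      obtain ⟨j, -, hj⟩ := Finset.mem_image.1 hv
      exact ⟨j, Subtype.ext hj⟩
    have hbij : Function.Bijective g :=
      (Fintype.bijective_iff_surjective_and_card g).2 ⟨hsurj, by simp [hcard]⟩
    exact hperm ((Equiv.ofBijective g hbij).trans gb.symm) (by ext j; simp)
  simp [lapT, adjT, hnotconst, hnotsurj]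

theorem isWTensor_lapT_of_enum (hm : 2 ≤ m) {s : ℕ} {E : Finset (Finset (Fin n))}
    {Γ : Fin s → Finset (Fin n)} (hs : 0 < s) (hsn : s ≤ n) (hinj : Function.Injective Γ)
    (hcover : Finset.univ.biUnion Γ = Finset.univ) (hI : WCondI Γ)
    (hE : E = Finset.univ.image Γ) (hcard : ∀ l, (Γ l).card = m) :
    IsWTensor (lapT m n E) := by
  refine ⟨s, Γ, fun l g => lapT m n {Γ l} (Subtype.val ∘ g), hs, hsn, hinj, hcover, hI,
    fun x => ?_, fun l => wCondIII_lapT_singleton hm (hcard l)⟩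
  rw [funext (lapT_eq_sum_lapT_singleton E), tmul_sum, hE,
    Finset.sum_image fun _ _ _ _ h => hinj h]
  exact Finset.sum_congr rfl fun l _ =>
    tmul_eq_subTmul_of_mem _ (fun _ hg => mem_of_lapT_singleton_ne_zero hg) x

theorem isWTensor_zero (hn : 0 < n) : IsWTensor (0 : (Fin m → Fin n) → ℝ) :=
  ⟨1, fun _ => Finset.univ, fun _ _ => 0, one_pos, hn, fun a b _ => Subsingleton.elim a b,
    by simp, fun p hp => absurd p.2 (by omega), fun x => by simp [tmul, subTmul],
    fun _ => Or.inr fun _ _ => le_rfl⟩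

end LaplacianTensor

namespace SimpleGraph

variable {V : Type*} {G : SimpleGraph V}

theorem IsAcyclic.eq_of_adj_of_dist_add_one_eq (hG : G.IsAcyclic) {u v a c : V}
    (hreach : G.Reachable u v) (ha : G.Adj a v) (hc : G.Adj c v)
    (hda : G.dist u a + 1 = G.dist u v) (hdc : G.dist u c + 1 = G.dist u v) : a = c := by
  classical
  obtain ⟨q, hq, -⟩ := hreach.exists_path_of_dist
  have hparent : ∀ a, G.Adj a v → G.dist u a + 1 = G.dist u v → a = q.penultimate := by
    intro a ha hda
    -- otherwise `v` lies on a shortest path from `u` to `a`, so `dist u v ≤ dist u a`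
    refine hG.eq_penultimate_of_adj_end hq ha.symm (by_contra fun ha' => ?_)
    obtain ⟨p, hp, hplen⟩ := (hreach.trans ha.symm.reachable).exists_path_of_dist
    have hv := hG.mem_support_of_ne_mem_support_of_adj_of_isPath hp hq ha ha'
    have := (dist_le (p.takeUntil v hv)).trans (p.length_takeUntil_le_length hv)
    omega
  exact (hparent a ha hda).trans (hparent c hc hdc).symm

variable [DecidableEq V]

theorem IsTree.exists_mem_forall_sup_dist_lt (hG : G.IsTree) (r : V) {e : Sym2 V}
    (he : e ∈ G.edgeSet) : ∃ b ∈ e, ∀ e' ∈ G.edgeSet, b ∈ e' → e' ≠ e →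
      e.toFinset.sup (G.dist r) < e'.toFinset.sup (G.dist r) := by
  have hfar : ∀ a b, G.Adj a b → G.dist r a + 1 = G.dist r b →
      ∀ e' ∈ G.edgeSet, b ∈ e' → e' ≠ s(a, b) →
        s(a, b).toFinset.sup (G.dist r) < e'.toFinset.sup (G.dist r) := by
    intro a b hab hd e' he' hb hne
    obtain ⟨c, rfl⟩ := Sym2.mem_iff_exists.1 hb
    have hca : c ≠ a := by rintro rfl; exact hne Sym2.eq_swap
    have hbc : G.Adj b c := he'
    have hdc : G.dist r c = G.dist r b + 1 := by
      refine (hG.dist_eq_dist_add_one_of_adj r hbc).resolve_left fun hdb => hca ?_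
      exact hG.isAcyclic.eq_of_adj_of_dist_add_one_eq (hG.connected r b) hbc.symm hab hdb.symm hd
    simp only [Sym2.toFinset_mk_eq, Finset.sup_insert, Finset.sup_singleton]
    omega
  induction e using Sym2.ind with
  | _ a b =>
    rcases hG.dist_eq_dist_add_one_of_adj r he with hd | hd
    · exact ⟨a, Sym2.mem_mk_left a b, by
        simpa only [Sym2.eq_swap (a := b)] using hfar b a he.symm hd.symm⟩
    · exact ⟨b, Sym2.mem_mk_right a b, hfar a b he hd.symm⟩

theorem IsTree.exists_enum_edgeSet [Fintype V] (hG : G.IsTree) :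
    ∃ (k : ℕ) (e : Fin k → Sym2 V), Function.Injective e ∧ Set.range e = G.edgeSet ∧
      k + 1 = Fintype.card V ∧ ∀ p, ((Finset.univ.filter (· < p)).biUnion
        (fun l => (e l).toFinset) ∩ (e p).toFinset).card ≤ 1 := by
  classical
  obtain ⟨r⟩ := hG.connected.nonempty
  let key : Sym2 V → ℕ := fun e => e.toFinset.sup (G.dist r)
  let e₀ := (Fintype.equivFin G.edgeSet).symm
  let σ := Tuple.sort (key ∘ Subtype.val ∘ e₀)
  have hmono : Monotone (key ∘ Subtype.val ∘ e₀ ∘ σ) :=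
    Tuple.monotone_sort (key ∘ Subtype.val ∘ e₀)
  have hinj : Function.Injective (Subtype.val ∘ e₀ ∘ σ) :=
    Subtype.val_injective.comp (e₀.injective.comp σ.injective)
  refine ⟨_, Subtype.val ∘ e₀ ∘ σ, hinj, ?_, ?_, fun p => ?_⟩
  · ext f
    refine ⟨?_, fun hf => ⟨σ.symm (e₀.symm ⟨f, hf⟩), by simp⟩⟩
    rintro ⟨l, rfl⟩
    exact (e₀ (σ l)).2
  · rw [← G.edgeFinset_card, hG.card_edgeFinset]
  obtain ⟨b, hb, hfar⟩ := hG.exists_mem_forall_sup_dist_lt r (e₀ (σ p)).2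
  have hsub : (Finset.univ.filter (· < p)).biUnion (fun l => (e₀ (σ l) : Sym2 V).toFinset) ∩
      (e₀ (σ p) : Sym2 V).toFinset ⊆ (e₀ (σ p) : Sym2 V).toFinset.erase b := by
    intro v hv
    simp only [Finset.mem_inter, Finset.mem_biUnion, Finset.mem_filter] at hv
    obtain ⟨⟨l, ⟨-, hlp⟩, hvl⟩, hvp⟩ := hv
    refine Finset.mem_erase.2 ⟨?_, hvp⟩
    rintro rfl
    exact (hfar _ (e₀ (σ l)).2 (Sym2.mem_toFinset.1 hvl) (hinj.ne hlp.ne)).not_ge (hmono hlp.le)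
  refine (Finset.card_le_card hsub).trans ?_
  rw [Finset.card_erase_of_mem (Sym2.mem_toFinset.2 hb), Sym2.card_toFinset]
  split_ifs <;> simp

end SimpleGraph

theorem wCondI_of_inter_subset_image {n s : ℕ} {α : Type*} [DecidableEq α]
    {Γ : Fin s → Finset α} {Γ' : Fin s → Finset (Fin n)} (f : α → Fin n)
    (hsub : ∀ l p, l < p → Γ' l ∩ Γ' p ⊆ (Γ l ∩ Γ p).image f)
    (hΓ : ∀ p, ((Finset.univ.filter (· < p)).biUnion Γ ∩ Γ p).card ≤ 1) : WCondI Γ' := by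
  intro p _
  refine (Finset.card_le_card (t := ((Finset.univ.filter (· < p)).biUnion Γ ∩ Γ p).image f)
    fun v hv => ?_).trans (Finset.card_image_le.trans (hΓ p))
  simp only [Finset.mem_inter, Finset.mem_biUnion, Finset.mem_filter] at hv
  obtain ⟨⟨l, ⟨-, hlp⟩, hvl⟩, hvp⟩ := hv
  obtain ⟨w, hw, rfl⟩ := Finset.mem_image.1 (hsub l p hlp (Finset.mem_inter.2 ⟨hvl, hvp⟩))
  rw [Finset.mem_inter] at hw
  exact Finset.mem_image_of_mem f (Finset.mem_inter.2
    ⟨Finset.mem_biUnion.2 ⟨l, Finset.mem_filter.2 ⟨Finset.mem_univ _, hlp⟩, hw.1⟩, hw.2⟩)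

section HyperTree

variable {n k : ℕ} {V0 : Finset (Fin n)}

def hyperedge (ι : Sym2 V0 → Fin k → Fin n) (e : Sym2 V0) : Finset (Fin n) :=
  e.toFinset.image Subtype.val ∪ Finset.univ.image (ι e)

variable {ι : Sym2 V0 → Fin k → Fin n}

theorem hyperedge_mk (a b : V0) :
    hyperedge ι s(a, b) = insert ↑a (insert ↑b (Finset.univ.image (ι s(a, b)))) := by
  simp [hyperedge, Sym2.toFinset_mk_eq, Finset.image_insert]

theorem val_mem_hyperedge_iff {e : Sym2 V0} (hnew : ∀ j, ι e j ∉ V0) (w : V0) :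
    (w : Fin n) ∈ hyperedge ι e ↔ w ∈ e := by
  simpa [hyperedge, Sym2.mem_toFinset] using fun j (h : ι e j = w) => absurd (h ▸ w.2) (hnew j)

theorem hyperedge_injOn : Set.InjOn (hyperedge ι) {e | ∀ j, ι e j ∉ V0} := fun _ he _ he' h =>
  Sym2.ext fun w => by rw [← val_mem_hyperedge_iff he, h, val_mem_hyperedge_iff he']

theorem card_hyperedge {e : Sym2 V0} (hdiag : ¬e.IsDiag) (hinj : Function.Injective (ι e))
    (hnew : ∀ j, ι e j ∉ V0) : (hyperedge ι e).card = k + 2 := by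
  have hdisj : Disjoint (e.toFinset.image Subtype.val) (Finset.univ.image (ι e)) := by
    refine Finset.disjoint_left.2 fun v hv hv' => ?_
    obtain ⟨w, -, rfl⟩ := Finset.mem_image.1 hv
    obtain ⟨j, -, hj⟩ := Finset.mem_image.1 hv'
    exact hnew j (hj ▸ w.2)
  rw [hyperedge, Finset.card_union_of_disjoint hdisj,
    Finset.card_image_of_injective _ Subtype.val_injective,
    Sym2.card_toFinset_of_not_isDiag _ hdiag, Finset.card_image_of_injective _ hinj,
    Finset.card_univ, Fintype.card_fin, add_comm]

theorem hyperedge_inter_subset {e e' : Sym2 V0} (hnew : ∀ j, ι e j ∉ V0)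
    (hnew' : ∀ j, ι e' j ∉ V0) (hdisj : ∀ j j', ι e j ≠ ι e' j') :
    hyperedge ι e ∩ hyperedge ι e' ⊆ (e.toFinset ∩ e'.toFinset).image Subtype.val := by
  intro v hv
  rw [Finset.mem_inter] at hv
  by_cases hv0 : v ∈ V0
  · refine Finset.mem_image.2 ⟨⟨v, hv0⟩, Finset.mem_inter.2 ⟨?_, ?_⟩, rfl⟩
    · exact Sym2.mem_toFinset.2 ((val_mem_hyperedge_iff hnew ⟨v, hv0⟩).1 hv.1)
    · exact Sym2.mem_toFinset.2 ((val_mem_hyperedge_iff hnew' ⟨v, hv0⟩).1 hv.2)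
  · have hextra : ∀ t, v ∈ hyperedge ι t → ∃ j, ι t j = v := by
      intro t ht
      rcases Finset.mem_union.1 ht with ht | ht
      · obtain ⟨w, -, rfl⟩ := Finset.mem_image.1 ht
        exact absurd w.2 hv0
      · simpa using ht
    obtain ⟨j, rfl⟩ := hextra e hv.1
    obtain ⟨j', hj'⟩ := hextra e' hv.2
    exact absurd hj'.symm (hdisj j j')

theorem eq_image_hyperedge {E : Finset (Finset (Fin n))} {T : SimpleGraph V0}
    (hE : ∀ f : Finset (Fin n), f ∈ E ↔ ∃ a b : V0, T.Adj a b ∧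
      f = insert (a : Fin n) (insert (b : Fin n) (Finset.univ.image (ι s(a, b)))))
    {s : ℕ} {e : Fin s → Sym2 V0} (he : Set.range e = T.edgeSet) :
    E = Finset.univ.image (hyperedge ι ∘ e) := by
  ext f
  simp only [hE, Finset.mem_image, Finset.mem_univ, true_and, Function.comp_apply]
  constructor
  · rintro ⟨a, b, hab, rfl⟩
    obtain ⟨l, hl⟩ : s(a, b) ∈ Set.range e := he ▸ hab
    exact ⟨l, by rw [hl, hyperedge_mk]⟩
  · rintro ⟨l, rfl⟩
    have hl : e l ∈ T.edgeSet := he ▸ Set.mem_range_self l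
    generalize e l = t at hl ⊢
    induction t using Sym2.ind with
    | _ a b => exact ⟨a, b, hl, hyperedge_mk a b⟩

theorem biUnion_hyperedge_eq_univ {T : SimpleGraph V0} (hT : T.Preconnected)
    (hcover : ∀ v : Fin n, v ∈ V0 ∨ ∃ t ∈ T.edgeSet, ∃ j, ι t j = v)
    {s : ℕ} (hs : 0 < s) {e : Fin s → Sym2 V0} (he : Set.range e = T.edgeSet) :
    Finset.univ.biUnion (hyperedge ι ∘ e) = Finset.univ := by
  refine Finset.eq_univ_of_forall fun v => Finset.mem_biUnion.2 ?_
  have hmem : ∀ t ∈ T.edgeSet, v ∈ hyperedge ι t → ∃ l ∈ Finset.univ, v ∈ hyperedge ι (e l) := by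
    rw [← he]
    rintro _ ⟨l, rfl⟩ hv
    exact ⟨l, Finset.mem_univ _, hv⟩
  rcases hcover v with hv | ⟨t, ht, j, rfl⟩
  · have : Nontrivial V0 := by
      have h0 : e ⟨0, hs⟩ ∈ T.edgeSet := he ▸ Set.mem_range_self _
      generalize e ⟨0, hs⟩ = t at h0
      induction t using Sym2.ind with
      | _ a b => exact SimpleGraph.Adj.nontrivial h0
    obtain ⟨u, hu⟩ := hT.exists_adj_of_nontrivial ⟨v, hv⟩
    exact hmem s(⟨v, hv⟩, u) hu (by simp [hyperedge, Sym2.mem_toFinset])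
  · exact hmem t ht (Finset.mem_union_right _ (Finset.mem_image_of_mem _ (Finset.mem_univ j)))

end HyperTree

/-- Theorem 4.2: the Laplacian tensor of an `m`-uniform hyper-tree generated by
independent vertices (built from a tree `T` on `V₀` by enlarging each tree edge `e`
with `m − 2` fresh pairwise-distinct vertices `ι e j`) is a symmetric W-tensor. -/
theorem theorem42 (m n : ℕ) (hm : 2 ≤ m)
    (E : Finset (Finset (Fin n)))
    (V0 : Finset (Fin n)) (T : SimpleGraph ↥V0) (hT : T.IsTree)
    (ι : Sym2 ↥V0 → Fin (m - 2) → Fin n)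
    (hnew : ∀ e ∈ T.edgeSet, ∀ j, ι e j ∉ V0)
    (hdistinct : ∀ e ∈ T.edgeSet, ∀ e' ∈ T.edgeSet, ∀ j j',
      ι e j = ι e' j' → e = e' ∧ j = j')
    (hcover : ∀ v : Fin n, v ∈ V0 ∨ ∃ e ∈ T.edgeSet, ∃ j, ι e j = v)
    (hE : ∀ f : Finset (Fin n), f ∈ E ↔ ∃ a b : ↥V0, T.Adj a b ∧
        f = insert (a : Fin n) (insert (b : Fin n)
          (Finset.image (ι s(a, b)) Finset.univ))) :
    IsSymT (lapT m n E) ∧ IsWTensor (lapT m n E) := by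
  classical
  obtain ⟨k, e, he_inj, he_range, hk_card, he_order⟩ := hT.exists_enum_edgeSet
  have he_edge : ∀ l, e l ∈ T.edgeSet := fun l => he_range ▸ Set.mem_range_self l
  have hkn : k + 1 ≤ n := by simpa [hk_card] using V0.card_le_univ
  have hEΓ := eq_image_hyperedge hE he_range
  refine ⟨lapT_isSymT E, ?_⟩
  rcases Nat.eq_zero_or_pos k with rfl | hk
  · rw [hEΓ, Finset.univ_eq_empty, Finset.image_empty, lapT_empty]
    exact isWTensor_zero hkn
  refine isWTensor_lapT_of_enum hm hk (by omega) ?_ (biUnion_hyperedge_eq_univ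
    hT.connected.preconnected hcover hk he_range) ?_ hEΓ fun l => ?_
  · exact fun l l' h => he_inj (hyperedge_injOn (hnew _ (he_edge l)) (hnew _ (he_edge l')) h)
  · refine wCondI_of_inter_subset_image Subtype.val (fun l p hlp => ?_) he_order
    exact hyperedge_inter_subset (hnew _ (he_edge l)) (hnew _ (he_edge p)) fun j j' h =>
      he_inj.ne hlp.ne (hdistinct _ (he_edge l) _ (he_edge p) j j' h).1
  · rw [Function.comp_apply, card_hyperedge (T.not_isDiag_of_mem_edgeSet (he_edge l))
      (fun j j' h => (hdistinct _ (he_edge l) _ (he_edge l) j j' h).2) (hnew _ (he_edge l))]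
    omega
end
end
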